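/- For every z ≥ 1, the identity 2·∑_{i=1}^z [C(z,i) · ∑_{j=0}^i C(z,j)] = 2^(2z) + ∑_{i=1}^{z−1} C(z,i)² holds. -/

import Mathlib

/-!
The double sum `∑_{j ≤ i} C(z,i) C(z,j)` contains every off-diagonal product once and every
diagonal one once, so twice it is `(∑ C(z,i))² + ∑ C(z,i)² = 4^z + ∑ C(z,i)²`. Removing the
term `i = 0` and the squares `C(z,0)² = C(z,z)² = 1` gives the identity.
-/

open Finset

theorem Finset.two_mul_sum_range_mul_sum_range_succ {R : Type*} [CommSemiring R] (f : ℕ → R)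
    (n : ℕ) :
    2 * ∑ i ∈ range n, f i * ∑ j ∈ range (i + 1), f j
      = (∑ i ∈ range n, f i) ^ 2 + ∑ i ∈ range n, f i ^ 2 := by
  induction n with
  | zero => simp
  | succ n ih =>
    rw [sum_range_succ, mul_add, ih, sum_range_succ, sum_range_succ]
    ring

theorem Nat.sum_range_choose_sq_eq_sum_Ico_add_two {z : ℕ} (hz : 1 ≤ z) :
    ∑ i ∈ range (z + 1), z.choose i ^ 2 = ∑ i ∈ Ico 1 z, z.choose i ^ 2 + 2 := by
  rw [sum_range_eq_add_Ico _ z.add_one_pos, sum_Ico_succ_top hz]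
  simp only [Nat.choose_zero_right, Nat.choose_self]
  ring

/-- Binomial identity used for the Act-win threshold function with m = k = z. -/
theorem actWin_binomial_identity (z : ℕ) (hz : 1 ≤ z) :
    2 * ∑ i ∈ Finset.Icc 1 z, z.choose i * ∑ j ∈ Finset.range (i + 1), z.choose j
      = 2 ^ (2 * z) + ∑ i ∈ Finset.Ico 1 z, (z.choose i) ^ 2 := by
  have h := two_mul_sum_range_mul_sum_range_succ z.choose (z + 1)
  rw [Nat.sum_range_choose, ← pow_mul, mul_comm z, Nat.sum_range_choose_sq_eq_sum_Ico_add_two hz,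
    sum_range_eq_add_Ico _ z.add_one_pos, Ico_add_one_right_eq_Icc] at h
  simp only [Nat.choose_zero_right, zero_add, sum_range_one, mul_one] at h
  omega
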